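/- Let b > 0 be real and set a = b in the standard rectangle setup, so that σ(x,y) = (b−x, y) and τ(x,y) = (b−y, b−x). Let K = {(x,y) ∈ [0,b]² : (y ≤ x and y ≤ b−x) or (y ≥ x and y ≥ b−x)} (the union of the bottom and top triangles cut out by the two diagonals of the square A = [0,b]²). Then K is compact, K ∪ τ(K) = A, K ∩ τ(K) has Lebesgue measure zero, and σ(K) = K. -/

import Mathlib

open MeasureTheory

/-- The square `A = [0,b] × [0,b]` of the standard rectangle setup. -/
def sqA (b : ℝ) : Set (ℝ × ℝ) := Set.Icc 0 b ×ˢ Set.Icc 0 b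

/-- The rectangle `B = [b−a, 0] × [0,b]` of the standard rectangle setup. -/
def recB (a b : ℝ) : Set (ℝ × ℝ) := Set.Icc (b - a) 0 ×ˢ Set.Icc 0 b

/-- `τ(x,y) = (b−y, b−x)`, the reflection in the line `x + y = b`. -/
def tauMap (b : ℝ) : ℝ × ℝ → ℝ × ℝ := fun p => (b - p.2, b - p.1)

/-- `ρ(x,y) = (b−a−x, b−y)`, the half-turn about the center of `B`. -/
def rhoMap (a b : ℝ) : ℝ × ℝ → ℝ × ℝ := fun p => (b - a - p.1, b - p.2)

/-- `σ(x,y) = (2b−a−x, y)`, the reflection in the vertical bisector of `A ∪ B`. -/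
def sigmaMap (a b : ℝ) : ℝ × ℝ → ℝ × ℝ := fun p => (2 * b - a - p.1, p.2)

/-- Compact sets `K ⊆ A` and `L ⊆ B` satisfying conditions Rh1–Rh3 of the standard
rectangle setup: (Rh1) `K ∪ τ(K) = A` with `K ∩ τ(K)` of measure zero;
(Rh2) `L ∪ ρ(L) = B` with `L ∩ ρ(L)` of measure zero; (Rh3) `σ(K ∪ L) = K ∪ L`. -/
def RhKL (a b : ℝ) (K L : Set (ℝ × ℝ)) : Prop :=
  IsCompact K ∧ IsCompact L ∧ K ⊆ sqA b ∧ L ⊆ recB a b ∧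
  K ∪ tauMap b '' K = sqA b ∧ volume (K ∩ tauMap b '' K) = 0 ∧
  L ∪ rhoMap a b '' L = recB a b ∧ volume (L ∩ rhoMap a b '' L) = 0 ∧
  sigmaMap a b '' (K ∪ L) = K ∪ L

/-!
The diagonals of the square are the zero sets of the affine forms `y - x` and `x + y - b`, and `K`
is the part of the square where these forms have the same sign, i.e. where their product
`diagProd b` is nonnegative. The reflection `τ` fixes the first form and negates the second, so
it negates `diagProd b`, and `τ(K)` is the part where `diagProd b ≤ 0`; the reflection `σ` swaps
the two forms, so it preserves `diagProd b` and `K`. The overlap `K ∩ τ(K)` lies on the two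
diagonals, which are graphs and hence null.
-/

lemma measure_prod_graph_eq_zero {α : Type*} [MeasurableSpace α] (μ : Measure α) [SFinite μ]
    {f : α → ℝ} (hf : Measurable f) : μ.prod volume {p : α × ℝ | p.2 = f p.1} = 0 := by
  rw [Measure.measure_prod_null (measurableSet_graph hf)]
  refine Filter.Eventually.of_forall fun x => ?_
  simp

def diagProd (b : ℝ) (p : ℝ × ℝ) : ℝ := (p.2 - p.1) * (p.1 + p.2 - b)

lemma continuous_diagProd (b : ℝ) : Continuous (diagProd b) := by
  unfold diagProd; fun_prop

lemma volume_diagProd_eq_zero (b : ℝ) : volume {p : ℝ × ℝ | diagProd b p = 0} = 0 := by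
  have hlines : {p : ℝ × ℝ | diagProd b p = 0} =
      {p | p.2 = id p.1} ∪ {p | p.2 = (fun x => b - x) p.1} := by
    ext p
    simp only [diagProd, Set.mem_ofPred_eq, Set.mem_union, mul_eq_zero, id, sub_eq_zero]
    constructor <;> rintro (h | h) <;> [left; right; left; right] <;> linarith
  rw [hlines, Measure.volume_eq_prod, measure_union_null_iff]
  exact ⟨measure_prod_graph_eq_zero _ measurable_id,
    measure_prod_graph_eq_zero _ (measurable_const.sub measurable_id)⟩

lemma diagProd_tauMap (b : ℝ) (p : ℝ × ℝ) : diagProd b (tauMap b p) = -diagProd b p := by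
  simp only [diagProd, tauMap]; ring

lemma diagProd_sigmaMap (b : ℝ) (p : ℝ × ℝ) : diagProd b (sigmaMap b b p) = diagProd b p := by
  simp only [diagProd, sigmaMap]; ring

lemma tauMap_involutive (b : ℝ) : Function.Involutive (tauMap b) := fun p => by
  simp [tauMap]

lemma sigmaMap_involutive (a b : ℝ) : Function.Involutive (sigmaMap a b) := fun p => by
  simp [sigmaMap]

lemma preimage_tauMap_sqA (b : ℝ) : tauMap b ⁻¹' sqA b = sqA b := by
  ext p
  simp only [sqA, tauMap, Set.mem_preimage, Set.mem_prod, Set.mem_Icc]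
  constructor <;> intro h <;> refine ⟨⟨?_, ?_⟩, ?_, ?_⟩ <;> linarith [h.1.1, h.1.2, h.2.1, h.2.2]

lemma preimage_sigmaMap_sqA (b : ℝ) : sigmaMap b b ⁻¹' sqA b = sqA b := by
  ext p
  simp only [sqA, sigmaMap, Set.mem_preimage, Set.mem_prod, Set.mem_Icc]
  constructor <;> intro h <;> refine ⟨⟨?_, ?_⟩, ?_, ?_⟩ <;> linarith [h.1.1, h.1.2, h.2.1, h.2.2]

lemma diagonal_triangles_eq (b : ℝ) :
    {p ∈ sqA b | (p.2 ≤ p.1 ∧ p.2 ≤ b - p.1) ∨ (p.1 ≤ p.2 ∧ b - p.1 ≤ p.2)} =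
      sqA b ∩ {p | 0 ≤ diagProd b p} := by
  ext p
  simp only [diagProd, Set.mem_inter_iff, Set.mem_ofPred_eq, mul_nonneg_iff,
    sub_nonneg, sub_nonpos]
  constructor <;> rintro ⟨hA, (h | h)⟩ <;> refine ⟨hA, ?_⟩ <;>
    [right; left; right; left] <;> constructor <;> linarith [h.1, h.2]

lemma image_tauMap_diagonal_triangles (b : ℝ) :
    tauMap b '' (sqA b ∩ {p | 0 ≤ diagProd b p}) = sqA b ∩ {p | diagProd b p ≤ 0} := by
  rw [(tauMap_involutive b).image_eq_preimage_symm, Set.preimage_inter, preimage_tauMap_sqA]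
  simp only [Set.preimage_ofPred_eq, diagProd_tauMap, neg_nonneg]

lemma image_sigmaMap_diagonal_triangles (b : ℝ) :
    sigmaMap b b '' (sqA b ∩ {p | 0 ≤ diagProd b p}) = sqA b ∩ {p | 0 ≤ diagProd b p} := by
  rw [(sigmaMap_involutive b b).image_eq_preimage_symm, Set.preimage_inter,
    preimage_sigmaMap_sqA]
  simp only [Set.preimage_ofPred_eq, diagProd_sigmaMap]

theorem stmt_8_general (b : ℝ)
    (K : Set (ℝ × ℝ))
    (hK : K = {p ∈ sqA b | (p.2 ≤ p.1 ∧ p.2 ≤ b - p.1) ∨ (p.1 ≤ p.2 ∧ b - p.1 ≤ p.2)}) :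
    IsCompact K ∧ K ∪ tauMap b '' K = sqA b ∧ volume (K ∩ tauMap b '' K) = 0 ∧
      sigmaMap b b '' K = K := by
  rw [diagonal_triangles_eq] at hK
  subst hK
  rw [image_tauMap_diagonal_triangles, image_sigmaMap_diagonal_triangles]
  refine ⟨?_, ?_, ?_, rfl⟩
  · exact (isCompact_Icc.prod isCompact_Icc).inter_right
      (isClosed_le continuous_const (continuous_diagProd b))
  · rw [← Set.inter_union_distrib_left]
    convert Set.inter_univ (sqA b)
    exact Set.eq_univ_of_forall fun p => le_total 0 (diagProd b p)
  · refine measure_mono_null (fun p hp => ?_) (volume_diagProd_eq_zero b)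
    exact le_antisymm hp.2.2 hp.1.2

/-- For `b > 0` and `a = b`, the union `K` of the bottom and top
triangles cut out of the square `A = [0,b]²` by its two diagonals is compact, satisfies
`K ∪ τ(K) = A` with `K ∩ τ(K)` of Lebesgue measure zero, and `σ(K) = K`. -/
theorem stmt_8 (b : ℝ) (hb : 0 < b)
    (K : Set (ℝ × ℝ))
    (hK : K = {p ∈ sqA b | (p.2 ≤ p.1 ∧ p.2 ≤ b - p.1) ∨ (p.1 ≤ p.2 ∧ b - p.1 ≤ p.2)}) :
    IsCompact K ∧ K ∪ tauMap b '' K = sqA b ∧ volume (K ∩ tauMap b '' K) = 0 ∧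
      sigmaMap b b '' K = K :=
  stmt_8_general b K hK
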